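/- arXiv:0812.2934 — 11 statements merged into one kernel-verified Lean document; each statement's English description precedes it below -/
import Mathlib

section
/- Let A and B be commutative algebras over ℚ (or commutative rings in which 2 and 3 are invertible), and let h : A → B be an additive map satisfying h(a⁴) = (h(a))⁴ for all a ∈ A. Then h is a 4-ring homomorphism: h(xyzw) = h(x)h(y)h(z)h(w) for all x, y, z, w ∈ A. -/
theorem stmt_4 {A B : Type*} [CommRing A] [CommRing B]
    [Invertible (2 : A)] [Invertible (3 : A)]
    [Invertible (2 : B)] [Invertible (3 : B)] (h : A → B)
    (hadd : ∀ x y : A, h (x + y) = h x + h y)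
    (hjordan : ∀ a : A, h (a ^ 4) = (h a) ^ 4) :
    ∀ x y z w : A, h (x * y * z * w) = h x * h y * h z * h w := by
  intro x y z w
  let f : A →+ B := AddMonoidHom.mk' h hadd
  have hf : ∀ a : A, f a = h a := fun _ => rfl
  have key : (24 : ℕ) • (x * y * z * w) =
      (x+y+z+w)^4 - ((x+y+z)^4 + (x+y+w)^4 + (x+z+w)^4 + (y+z+w)^4)
      + ((x+y)^4 + (x+z)^4 + (x+w)^4 + (y+z)^4 + (y+w)^4 + (z+w)^4)
      - (x^4 + y^4 + z^4 + w^4) := by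
    simp [nsmul_eq_mul]; ring
  have h1 : (24 : ℕ) • h (x * y * z * w) =
      (h x + h y + h z + h w)^4
      - ((h x + h y + h z)^4 + (h x + h y + h w)^4 + (h x + h z + h w)^4
        + (h y + h z + h w)^4)
      + ((h x + h y)^4 + (h x + h z)^4 + (h x + h w)^4 + (h y + h z)^4
        + (h y + h w)^4 + (h z + h w)^4)
      - (h x ^ 4 + h y ^ 4 + h z ^ 4 + h w ^ 4) := by
    have := congrArg f key
    rw [map_nsmul] at this
    simp only [map_sub, map_add] at this
    simp only [hf] at this
    rw [this]
    simp only [hjordan, hadd]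
  have h2 : (24 : ℕ) • (h x * h y * h z * h w) =
      (h x + h y + h z + h w)^4
      - ((h x + h y + h z)^4 + (h x + h y + h w)^4 + (h x + h z + h w)^4
        + (h y + h z + h w)^4)
      + ((h x + h y)^4 + (h x + h z)^4 + (h x + h w)^4 + (h y + h z)^4
        + (h y + h w)^4 + (h z + h w)^4)
      - (h x ^ 4 + h y ^ 4 + h z ^ 4 + h w ^ 4) := by
    simp [nsmul_eq_mul]; ring
  have h3 : (24 : B) * h (x * y * z * w) = (24 : B) * (h x * h y * h z * h w) := by
    have := h1.trans h2.symm
    simpa [nsmul_eq_mul] using this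
  haveI : Invertible (24 : B) := by
    have e : (24 : B) = 2 ^ 3 * 3 := by norm_num
    rw [e]; exact invertibleMul _ _
  calc h (x * y * z * w) = ⅟(24 : B) * ((24 : B) * h (x * y * z * w)) := by
        rw [← mul_assoc, invOf_mul_self, one_mul]
    _ = ⅟(24 : B) * ((24 : B) * (h x * h y * h z * h w)) := by rw [h3]
    _ = h x * h y * h z * h w := by rw [← mul_assoc, invOf_mul_self, one_mul]
end

section
/- Let A, B be commutative algebras over ℂ and h : A → B an additive map with h(a³) = h(a)³ for all a ∈ A. Then for all x, y ∈ A, h(x²y + xy²) = h(x)²h(y) + h(x)h(y)². -/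
theorem stmt_5 {A B : Type*} [CommRing A] [Algebra ℂ A] [CommRing B] [Algebra ℂ B]
    (h : A → B)
    (hadd : ∀ x y : A, h (x + y) = h x + h y)
    (hjordan : ∀ a : A, h (a ^ 3) = (h a) ^ 3) :
    ∀ x y : A, h (x ^ 2 * y + x * y ^ 2) = (h x) ^ 2 * h y + h x * (h y) ^ 2 := by
  intro x y
  have key : h ((x + y) ^ 3) = (h x + h y) ^ 3 := by rw [hjordan, hadd]
  set s := x ^ 2 * y + x * y ^ 2 with hs
  have hexp : (x + y) ^ 3 = x ^ 3 + (s + (s + s)) + y ^ 3 := by rw [hs]; ring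
  have h1 : h (x ^ 3 + (s + (s + s)) + y ^ 3)
      = h (x ^ 3) + (h s + (h s + h s)) + h (y ^ 3) := by
    rw [hadd (x ^ 3 + (s + (s + s))) (y ^ 3), hadd (x ^ 3) (s + (s + s)),
      hadd s (s + s), hadd s s]
  rw [hexp, h1, hjordan, hjordan] at key
  have hmul : (3 : B) * h s =
      (3 : B) * ((h x) ^ 2 * h y + h x * (h y) ^ 2) := by linear_combination key
  have hunit : IsUnit (3 : B) := by
    have h3 : (3 : B) = algebraMap ℂ B 3 := (map_ofNat (algebraMap ℂ B) 3).symm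
    rw [h3]
    exact (isUnit_iff_ne_zero.mpr (by norm_num)).map (algebraMap ℂ B)
  exact hunit.mul_left_cancel hmul
end

section
/- Let A, B be commutative algebras over ℚ and h : A → B an additive map with h(a⁴) = h(a)⁴ for all a ∈ A. Then for all x, y ∈ A, h(x²y²) = h(x)²h(y)². -/
theorem stmt_6 {A B : Type*} [CommRing A] [Algebra ℚ A] [CommRing B] [Algebra ℚ B]
    (h : A → B)
    (hadd : ∀ x y : A, h (x + y) = h x + h y)
    (hjordan : ∀ a : A, h (a ^ 4) = (h a) ^ 4) :
    ∀ x y : A, h (x ^ 2 * y ^ 2) = (h x) ^ 2 * (h y) ^ 2 := by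
  intro x y
  set e : A →+ B := AddMonoidHom.mk' h hadd with he
  have h4 : ∀ a : A, e (a ^ 4) = (e a) ^ 4 := hjordan
  have key : e ((x + y) ^ 4) + e ((x - y) ^ 4)
      = (e x + e y) ^ 4 + (e x - e y) ^ 4 := by
    rw [h4, h4, map_add, map_sub]
  have expandA : (x + y) ^ 4 + (x - y) ^ 4
      = x ^ 4 + x ^ 4 + 12 • (x ^ 2 * y ^ 2) + (y ^ 4 + y ^ 4) := by
    rw [nsmul_eq_mul]; push_cast; ring
  have lhs : e ((x + y) ^ 4) + e ((x - y) ^ 4)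
      = e (x ^ 4) + e (x ^ 4) + 12 • e (x ^ 2 * y ^ 2) + (e (y ^ 4) + e (y ^ 4)) := by
    rw [← map_add, expandA]
    simp only [map_add, map_nsmul]
  rw [lhs, h4, h4] at key
  have q12 : ∀ b : B, (12 : ℚ) • b = 12 * b := fun b => by
    rw [Algebra.smul_def, show ((12:ℚ)) = ((12:ℕ):ℚ) by norm_num, map_natCast]
    norm_num
  have cancel : ∀ c d : B, (12 : ℚ) • c = (12 : ℚ) • d → c = d := by
    intro c d hcd
    have h2 := congrArg (fun z => (12 : ℚ)⁻¹ • z) hcd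
    simp only [smul_smul] at h2
    norm_num at h2
    exact h2
  have main : (12 : ℚ) • e (x ^ 2 * y ^ 2) = (12 : ℚ) • ((e x) ^ 2 * (e y) ^ 2) := by
    rw [q12, q12]
    rw [nsmul_eq_mul] at key
    push_cast at key
    linear_combination key
  exact cancel _ _ main
end

section
/- Let A be a (not necessarily commutative) ring and h : A → ℂ an additive map with h(a³) = (h(a))³ for all a ∈ A. Then for all x, y ∈ A, h(xy² + y²x + yxy) = 3·h(x)·h(y)². -/
theorem stmt_7 {A : Type*} [Ring A] (h : A → ℂ)
    (hadd : ∀ x y : A, h (x + y) = h x + h y)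
    (hjordan : ∀ a : A, h (a ^ 3) = (h a) ^ 3) :
    ∀ x y : A, h (x * y ^ 2 + y ^ 2 * x + y * x * y) = 3 * h x * (h y) ^ 2 := by
  have h0 : h 0 = 0 := by
    have := hadd 0 0
    simp only [add_zero] at this
    linear_combination -this
  have hneg : ∀ a : A, h (-a) = - h a := by
    intro a
    have := hadd a (-a)
    rw [add_neg_cancel, h0] at this
    linear_combination -this
  intro x y
  have key : (x + y) ^ 3 + (x - y) ^ 3 =
      (x ^ 3 + x ^ 3) + ((x * y ^ 2 + y ^ 2 * x + y * x * y) +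
        (x * y ^ 2 + y ^ 2 * x + y * x * y)) := by noncomm_ring
  have e1 : h ((x + y) ^ 3 + (x - y) ^ 3) = (h x + h y) ^ 3 + (h x - h y) ^ 3 := by
    rw [hadd, hjordan, hjordan, hadd, sub_eq_add_neg x y, hadd, hneg, ← sub_eq_add_neg]
  have e2 : h ((x + y) ^ 3 + (x - y) ^ 3) =
      (h x ^ 3 + h x ^ 3) + (h (x * y ^ 2 + y ^ 2 * x + y * x * y) +
        h (x * y ^ 2 + y ^ 2 * x + y * x * y)) := by
    rw [key, hadd, hadd, hadd, hjordan]
  have := e1.symm.trans e2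
  linear_combination -this / 2
end

section
/- Let A be a (not necessarily commutative) ring and h : A → ℂ an additive map with h(a³) = (h(a))³ for all a ∈ A. Then h(yxz - xzy) = 0 for all x, y, z ∈ A. -/
private theorem my_hsub {A : Type*} [Ring A] (h : A → ℂ)
    (hadd : ∀ x y : A, h (x + y) = h x + h y) (x y : A) :
    h (x - y) = h x - h y := by
  have := hadd (x - y) y
  rw [sub_add_cancel] at this
  linear_combination -this

private theorem cubeA {A : Type*} [Ring A] (h : A → ℂ)
    (hadd : ∀ x y : A, h (x + y) = h x + h y)
    (hjordan : ∀ a : A, h (a ^ 3) = (h a) ^ 3) (a b : A) :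
    h (a^2*b + (a*b*a + b*a^2)) = 3 * (h a)^2 * h b := by
  have hb3 := hjordan b
  have r1 : (a+b)^3 = (a^3 + (a*b^2 + (b*a*b + b^2*a))) + ((a^2*b + (a*b*a + b*a^2)) + b^3) := by
    noncomm_ring
  have r2 : (a-b)^3 = (a^3 + (a*b^2 + (b*a*b + b^2*a))) - ((a^2*b + (a*b*a + b*a^2)) + b^3) := by
    noncomm_ring
  have e1 : h (a^3 + (a*b^2 + (b*a*b + b^2*a))) + (h (a^2*b + (a*b*a + b*a^2)) + h (b^3))
      = (h a + h b)^3 := by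
    rw [← hadd, ← hadd, ← r1, ← hadd]
    exact hjordan (a+b)
  have e2 : h (a^3 + (a*b^2 + (b*a*b + b^2*a))) - (h (a^2*b + (a*b*a + b*a^2)) + h (b^3))
      = (h a - h b)^3 := by
    rw [← hadd, ← my_hsub h hadd, ← r2, ← my_hsub h hadd]
    exact hjordan (a-b)
  linear_combination (e1 - e2) / 2 - hb3

private theorem cubeB {A : Type*} [Ring A] (h : A → ℂ)
    (hadd : ∀ x y : A, h (x + y) = h x + h y)
    (hjordan : ∀ a : A, h (a ^ 3) = (h a) ^ 3) (a b c : A) :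
    h (a*b*c + (a*c*b + (b*a*c + (b*c*a + (c*a*b + c*b*a))))) = 6 * h a * h b * h c := by
  have h2 := cubeA h hadd hjordan a b
  have h3 := cubeA h hadd hjordan c b
  have r : (a+c)^2*b + ((a+c)*b*(a+c) + b*(a+c)^2) =
      (a^2*b + (a*b*a + b*a^2)) + ((c^2*b + (c*b*c + b*c^2)) +
        (a*b*c + (a*c*b + (b*a*c + (b*c*a + (c*a*b + c*b*a)))))) := by noncomm_ring
  have h1 : h (a^2*b + (a*b*a + b*a^2)) + (h (c^2*b + (c*b*c + b*c^2)) +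
      h (a*b*c + (a*c*b + (b*a*c + (b*c*a + (c*a*b + c*b*a))))))
      = 3 * (h a + h c)^2 * h b := by
    rw [← hadd, ← hadd, ← r, ← hadd]
    exact cubeA h hadd hjordan (a+c) b
  linear_combination h1 - h2 - h3

private theorem aux_mul {A : Type*} [Ring A] (g : A → ℂ)
    (gadd : ∀ x y : A, g (x + y) = g x + g y)
    (gjordan : ∀ a : A, g (a ^ 3) = (g a) ^ 3)
    (g1 : g 1 = 1) (a b : A) : g (a * b) = g a * g b := by
  have jord : ∀ u v : A, g (u*v + v*u) = 2 * g u * g v := by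
    intro u v
    have hB := cubeB g gadd gjordan u v 1
    rw [g1] at hB
    have r : u*v*1 + (u*1*v + (v*u*1 + (v*1*u + (1*u*v + 1*v*u)))) =
        (u*v+v*u) + ((u*v+v*u) + (u*v+v*u)) := by noncomm_ring
    rw [r] at hB
    simp only [gadd] at hB
    rw [gadd]
    linear_combination hB / 3
  have gsq : ∀ u : A, g (u*u) = g u * g u := by
    intro u
    have hj := jord u u
    rw [gadd] at hj
    linear_combination hj / 2
  have aba : ∀ u v : A, g (u*v*u) = g u * g u * g v := by
    intro u v
    have hA := cubeA g gadd gjordan u v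
    rw [pow_two] at hA
    have hj := jord (u*u) v
    simp only [gadd] at hA hj
    linear_combination hA - hj - 2 * g v * gsq u
  have hb2 : g (a*(b*b)*a) = g a * g a * (g b * g b) := by rw [aba a (b*b), gsq b]
  have ha2 : g (b*(a*a)*b) = g b * g b * (g a * g a) := by rw [aba b (a*a), gsq a]
  have hu := gsq (a*b + b*a)
  have hj := jord a b
  rw [gadd] at hj
  have r : (a*b + b*a)*(a*b + b*a) =
      (a*b)*(a*b) + (a*(b*b)*a + (b*(a*a)*b + (b*a)*(b*a))) := by noncomm_ring
  rw [r] at hu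
  simp only [gadd] at hu
  have s1 := gsq (a*b)
  have s2 := gsq (b*a)
  have key : (g (a*b) - g a * g b)^2 = 0 := by
    linear_combination (hu - s1 - s2 - hb2 - ha2) / 2 + g (a*b) * hj
  have := sq_eq_zero_iff.mp key
  linear_combination this

theorem stmt_9 {A : Type*} [Ring A] (h : A → ℂ)
    (hadd : ∀ x y : A, h (x + y) = h x + h y)
    (hjordan : ∀ a : A, h (a ^ 3) = (h a) ^ 3) :
    ∀ x y z : A, h (y * x * z - x * z * y) = 0 := by
  intro x y z
  by_cases hcase : h 1 ^ 2 = 1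
  · have gadd : ∀ u v : A, h 1 * h (u + v) = h 1 * h u + h 1 * h v := fun u v => by
      rw [hadd]; ring
    have gj : ∀ a : A, h 1 * h (a ^ 3) = (h 1 * h a) ^ 3 := fun a => by
      rw [hjordan a]
      linear_combination (- h 1 * (h a)^3) * hcase
    have g1 : h 1 * h 1 = 1 := by linear_combination hcase
    have m := aux_mul (fun a => h 1 * h a) gadd gj g1
    have hmul : ∀ u v : A, h (u * v) = h 1 * h u * h v := by
      intro u v
      have mm := m u v
      linear_combination h 1 * mm - (h (u*v) - h 1 * h u * h v) * hcase
    have t1 : h (y*x*z) = h y * h x * h z := by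
      rw [hmul (y*x) z, hmul y x]
      linear_combination (h y * h x * h z) * hcase
    have t2 : h (x*z*y) = h x * h z * h y := by
      rw [hmul (x*z) y, hmul x z]
      linear_combination (h x * h z * h y) * hcase
    rw [my_hsub h hadd, t1, t2]; ring
  · have hz : ∀ b : A, h b = 0 := by
      intro b
      have hA := cubeA h hadd hjordan 1 b
      simp only [one_pow, one_mul, mul_one] at hA
      rw [hadd, hadd] at hA
      have hb0 : h b * (1 - h 1 ^ 2) = 0 := by linear_combination hA / 3
      rcases mul_eq_zero.mp hb0 with h' | h'
      · exact h'
      · exact absurd (by linear_combination -h' : h 1 ^ 2 = 1) hcase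
    rw [my_hsub h hadd, hz, hz]; ring
end

section
/- Let A be a (not necessarily commutative) Banach algebra (or just a ring) and h : A → ℂ an additive map with h(a³) = (h(a))³ for all a ∈ A. Then h is a 3-ring homomorphism: h(abc) = h(a)h(b)h(c) for all a, b, c ∈ A. -/
theorem stmt_10 {A : Type*} [Ring A] (h : A → ℂ)
    (hadd : ∀ x y : A, h (x + y) = h x + h y)
    (hjordan : ∀ a : A, h (a ^ 3) = (h a) ^ 3) :
    ∀ a b c : A, h (a * b * c) = h a * h b * h c := by
  classical
  let f : A →+ ℂ := AddMonoidHom.mk' h hadd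
  have hf : ∀ x : A, h x = f x := fun _ => rfl
  have hj : ∀ a : A, f (a ^ 3) = (f a) ^ 3 := fun a => hjordan a
  suffices H : ∀ a b c : A, f (a * b * c) = f a * f b * f c by
    intro a b c; rw [hf, hf, hf, hf]; exact H a b c
  -- Step 1: polarization of the cube in one variable
  have P1 : ∀ a b : A, f (a^2*b) + f (a*b*a) + f (b*a^2) = 3 * (f a)^2 * f b := by
    intro a b
    have E1 := hj (a + b)
    have ea : (a+b)^3 = a^3 + a^2*b + a*b*a + b*a^2 + a*b^2 + b*a*b + b^2*a + b^3 := by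
      noncomm_ring
    rw [ea] at E1
    simp only [map_add] at E1
    rw [hj a, hj b] at E1
    have E2 := hj (a - b)
    have eb : (a-b)^3 = a^3 - a^2*b - a*b*a - b*a^2 + a*b^2 + b*a*b + b^2*a - b^3 := by
      noncomm_ring
    rw [eb] at E2
    simp only [map_add, map_sub] at E2
    rw [hj a, hj b] at E2
    linear_combination (E1 - E2) / 2
  set e : ℂ := f 1 with he_def
  have he3 : e ^ 3 = e := by
    have := hj 1
    rw [one_pow] at this
    linear_combination -this
  have heq : ∀ b : A, f b = e^2 * f b := by
    intro b
    have := P1 1 b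
    rw [show (1:A)^2*b = b by noncomm_ring, show (1:A)*b*1 = b by noncomm_ring,
        show b*(1:A)^2 = b by noncomm_ring] at this
    linear_combination this / 3
  have hcase : e = 0 ∨ e^2 = 1 := by
    rcases mul_eq_zero.mp (show e * (e^2 - 1) = 0 by linear_combination he3) with h1 | h1
    · exact Or.inl h1
    · right; linear_combination h1
  intro a b c
  rcases hcase with he0 | he2
  · have hz : ∀ x : A, f x = 0 := by
      intro x
      have := heq x
      rw [he0] at this
      simpa using this
    rw [hz, hz a]; ring
  · -- e^2 = 1
    have Psq : ∀ x : A, f (x^2) = e * (f x)^2 := by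
      intro x
      have := P1 x 1
      rw [show x^2*(1:A) = x^2 by noncomm_ring, show x*(1:A)*x = x^2 by noncomm_ring,
          show (1:A)*x^2 = x^2 by noncomm_ring] at this
      linear_combination this / 3
    have Pol : ∀ x y : A, f (x*y) + f (y*x) = 2 * e * f x * f y := by
      intro x y
      have := Psq (x + y)
      rw [show (x+y)^2 = x^2 + x*y + y*x + y^2 by noncomm_ring] at this
      simp only [map_add] at this
      rw [Psq x, Psq y] at this
      linear_combination this
    have Jaba : ∀ x y : A, f (x*y*x) = (f x)^2 * f y := by
      intro x y
      have t1 := Pol (x*y + y*x) x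
      rw [show (x*y+y*x)*x = x*y*x + y*x^2 by noncomm_ring,
          show x*(x*y+y*x) = x^2*y + x*y*x by noncomm_ring] at t1
      simp only [map_add] at t1
      have t2 := Pol (x^2) y
      rw [Psq x] at t2
      have t3 := Pol x y
      linear_combination (t1 - t2) / 2 + e * f x * t3 + (f x)^2 * f y * he2
    have Hmul : ∀ x y : A, f (x*y) = e * f x * f y := by
      intro x y
      have s1 := Pol x y
      have key := Pol (y*x*y) x
      rw [show (y*x*y)*x = (y*x)^2 by noncomm_ring,
          show x*(y*x*y) = (x*y)^2 by noncomm_ring,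
          Psq (y*x), Psq (x*y), Jaba y x] at key
      have s2 : (f (x*y))^2 + (f (y*x))^2 = 2 * (f x)^2 * (f y)^2 := by
        linear_combination e * key - ((f (x*y))^2 + (f (y*x))^2 - 2*(f x)^2*(f y)^2) * he2
      have hdiff : (f (x*y) - f (y*x))^2 = 0 := by
        linear_combination 2 * s2 - (f (x*y) + f (y*x) + 2*e*f x*f y) * s1 -
          4 * (f x)^2 * (f y)^2 * he2
      have heqxy : f (x*y) = f (y*x) :=
        sub_eq_zero.mp (pow_eq_zero_iff two_ne_zero |>.mp hdiff)
      linear_combination (s1 + heqxy) / 2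
    have key := Hmul (a*b) c
    rw [Hmul a b] at key
    rw [show a*b*c = (a*b)*c from rfl, key]
    linear_combination f a * f b * f c * he2
end

section
/- Let A be a (not necessarily commutative) Banach algebra and B a semisimple commutative Banach algebra over ℂ, and let h : A → B be an additive map with h(a³) = (h(a))³ for all a ∈ A. Then h(abc) = h(a)h(b)h(c) for all a, b, c ∈ A. -/
section Scalar
variable {R : Type*} [Ring R] (f : R → ℂ)
  (hadd : ∀ x y : R, f (x + y) = f x + f y)
  (hcube : ∀ a : R, f (a ^ 3) = (f a) ^ 3)

include hadd hcube

theorem scalar_cube_mult : ∀ a b c : R, f (a * b * c) = f a * f b * f c := by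
  have key : ∀ a b : R, f (a*a*b) + f (a*b*a) + f (b*(a*a)) = 3 * (f a)^2 * f b := by
    intro a b
    have e1 : f ((a+b)^3) = (f a + f b)^3 := by rw [hcube, hadd]
    have eb2 : f (b + b) = 2 * f b := by rw [hadd]; ring
    have e2 : f ((a+(b+b))^3) = (f a + 2 * f b)^3 := by rw [hcube, hadd, eb2]
    have exp1 : (a+b)^3 = a^3 + ((a*a*b + a*b*a) + b*(a*a)) + ((a*(b*b) + b*a*b) + b*b*a) + b^3 := by
      noncomm_ring
    have exp2 : (a+(b+b))^3 = a^3 + (((a*a*b + a*a*b) + (a*b*a + a*b*a)) + (b*(a*a) + b*(a*a)))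
        + ((((a*(b*b) + a*(b*b)) + (a*(b*b) + a*(b*b))) + ((b*a*b + b*a*b) + (b*a*b + b*a*b)))
          + ((b*b*a + b*b*a) + (b*b*a + b*b*a))) + (b+b)^3 := by
      noncomm_ring
    have cbb : f ((b+b)^3) = 8 * (f b)^3 := by rw [hcube, eb2]; ring
    rw [exp1] at e1
    rw [exp2] at e2
    simp only [hadd] at e1 e2
    rw [hcube a, hcube b] at e1
    rw [hcube a, cbb] at e2
    linear_combination 2*e1 - e2/2
  have hsq : ∀ a : R, f (a*a) = f 1 * (f a)^2 := by
    intro a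
    have := key a 1
    simp only [mul_one, one_mul] at this
    linear_combination this / 3
  have hC : ∀ b : R, f b = (f 1)^2 * f b := by
    intro b
    have := key 1 b
    simp only [mul_one, one_mul] at this
    linear_combination this / 3
  by_cases h1 : (f 1)^2 = 1
  · set ε := f 1 with hε
    set g : R → ℂ := fun x => ε * f x with hg
    have gadd : ∀ x y : R, g (x + y) = g x + g y := by
      intro x y; simp only [hg, hadd]; ring
    have gsq : ∀ x : R, g (x*x) = (g x)^2 := by
      intro x; simp only [hg, hsq x]; ring
    have J1 : ∀ x y : R, g (x*y) + g (y*x) = 2 * g x * g y := by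
      intro x y
      have e : g ((x+y)*(x+y)) = (g x + g y)^2 := by rw [← gadd]; exact gsq (x+y)
      have exp : (x+y)*(x+y) = x*x + (x*y + (y*x + y*y)) := by noncomm_ring
      rw [exp] at e
      simp only [gadd] at e
      rw [gsq x, gsq y] at e
      linear_combination e
    have J2 : ∀ x y : R, g (x*y*x) = (g x)^2 * g y := by
      intro x y
      have h1' := J1 x (x*y)
      have h2' := J1 x (y*x)
      have h3' := J1 (x*x) y
      rw [show x*(x*y) = x*x*y from (mul_assoc x x y).symm] at h1'
      rw [show (x*y)*x = x*y*x from rfl] at h1'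
      rw [show x*(y*x) = x*y*x from (mul_assoc x y x).symm] at h2'
      rw [show (y*x)*x = y*(x*x) from mul_assoc y x x] at h2'
      rw [gsq x] at h3'
      have hJ1xy := J1 x y
      linear_combination (h1' + h2' - h3')/2 + g x * hJ1xy
    have J3 : ∀ x y : R, g (x*y) * g (y*x) = (g x)^2 * (g y)^2 := by
      intro x y
      have e := J1 (x*y) (y*x)
      rw [show (x*y)*(y*x) = x*(y*y)*x from by noncomm_ring] at e
      rw [show (y*x)*(x*y) = y*(x*x)*y from by noncomm_ring] at e
      rw [J2 x (y*y), J2 y (x*x), gsq x, gsq y] at e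
      linear_combination -e / 2
    have gmul : ∀ x y : R, g (x*y) = g x * g y := by
      intro x y
      have hs := J1 x y
      have hp := J3 x y
      have hz : (g (x*y) - g x * g y)^2 = 0 := by
        linear_combination (g (x*y)) * hs - hp
      exact sub_eq_zero.mp (pow_eq_zero_iff (n := 2) (by norm_num) |>.mp hz)
    intro a b c
    have hgabc : g (a*b*c) = g a * g b * g c := by rw [gmul (a*b) c, gmul a b]
    simp only [hg] at hgabc
    linear_combination ε * hgabc + ((- f (a*b*c)) + ((f 1)^2+1) * (f a * f b * f c)) * h1
  · have hz : ∀ x : R, f x = 0 := by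
      intro x
      have := hC x
      have h2 : f x * (1 - (f 1)^2) = 0 := by linear_combination this
      rcases mul_eq_zero.mp h2 with h | h
      · exact h
      · exact absurd (by linear_combination -h) h1
    intro a b c
    rw [hz, hz a, hz b, hz c]; ring
end Scalar

theorem stmt_11 {A B : Type*} [NormedRing A] [NormedAlgebra ℂ A] [CompleteSpace A]
    [NormedCommRing B] [NormedAlgebra ℂ B] [CompleteSpace B]
    (hsemisimple : Ideal.jacobson (⊥ : Ideal B) = ⊥)
    (h : A → B)
    (hadd : ∀ x y : A, h (x + y) = h x + h y)
    (hjordan : ∀ a : A, h (a ^ 3) = (h a) ^ 3) :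
    ∀ a b c : A, h (a * b * c) = h a * h b * h c := by
  intro a b c
  have key : ∀ m : Ideal B, m.IsMaximal → h (a*b*c) - h a * h b * h c ∈ m := by
    intro m hm
    haveI := hm
    set ψ : B →ₐ[ℂ] ℂ := WeakDual.CharacterSpace.equivAlgHom m.toCharacterSpace with hψ
    have hψapp : ∀ x : B, x ∈ m → ψ x = 0 := fun x hx =>
      m.toCharacterSpace_apply_eq_zero_of_mem hx
    have hle : m ≤ RingHom.ker (ψ : B →+* ℂ) := fun x hx => by
      simpa [RingHom.mem_ker] using hψapp x hx
    have hne : RingHom.ker (ψ : B →+* ℂ) ≠ ⊤ := by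
      intro hT
      have : (1 : B) ∈ RingHom.ker (ψ : B →+* ℂ) := hT ▸ trivial
      simp [RingHom.mem_ker] at this
    have hmker : m = RingHom.ker (ψ : B →+* ℂ) := hm.eq_of_le hne hle
    have hmult := scalar_cube_mult (fun x : A => ψ (h x))
      (fun x y => by simp [hadd x y])
      (fun x => by simp [hjordan x]) a b c
    rw [hmker, RingHom.mem_ker]
    simp only [map_sub, map_mul]
    simpa using sub_eq_zero.mpr hmult
  have hmem : h (a*b*c) - h a * h b * h c ∈ Ideal.jacobson (⊥ : Ideal B) := by
    rw [Ideal.jacobson, Ideal.mem_sInf]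
    rintro J ⟨-, hJ⟩
    exact key J hJ
  rw [hsemisimple, Ideal.mem_bot] at hmem
  exact sub_eq_zero.mp hmem
end

section
/- Let h : A → B be a bounded linear map between C*-algebras satisfying h(a*a) = h(a)*h(a) for all a ∈ A and h((a*a)^k) = (h(a*a))^k for all a ∈ A. Then for every a ∈ A, ‖h(a)‖^(4k+2) ≤ ‖h‖⁴ · ‖a‖^(4k+2). -/
/-!
Applying `h (a⋆a) = h(a)⋆h(a)` and the C⋆-identity `n` times gives
`‖h a‖ ^ 2 ^ n ≤ ‖h‖ * ‖a‖ ^ 2 ^ n`, and letting `n → ∞` shows that `h` is contractive.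
For `k ≥ 1` the bound then follows by splitting off the factor `‖h a‖ ^ 4 ≤ ‖h‖ ^ 4 * ‖a‖ ^ 4`.
For `k = 0` the power hypothesis says `h 1 = 1`, so `‖h‖ ≥ 1` unless `B` is trivial.
-/

theorem le_of_forall_pow_two_pow_le_mul {a b C : ℝ} (hb : 0 ≤ b)
    (hab : ∀ n : ℕ, a ^ 2 ^ n ≤ C * b ^ 2 ^ n) : a ≤ b := by
  by_contra! hba
  have hb : 0 < b := by
    refine hb.lt_of_ne fun hb0 => ?_
    have := hab 0
    simp only [pow_zero, pow_one, ← hb0, mul_zero] at this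
    linarith
  have hr : 1 < a / b := (one_lt_div hb).2 hba
  obtain ⟨N, hN⟩ := pow_unbounded_of_one_lt C hr
  have hCN : (a / b) ^ 2 ^ N ≤ C := by
    rw [div_pow, div_le_iff₀ (by positivity)]
    exact hab N
  have hN2 : (a / b) ^ N ≤ (a / b) ^ 2 ^ N := pow_le_pow_right₀ hr.le Nat.lt_two_pow_self.le
  linarith

theorem pow_add_le_pow_mul_pow_add {x y c : ℝ} (hx : 0 ≤ x) (hxc : x ≤ c * y) (hxy : x ≤ y)
    (m j : ℕ) : x ^ (m + j) ≤ c ^ m * y ^ (m + j) :=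
  calc x ^ (m + j) = x ^ m * x ^ j := pow_add x m j
    _ ≤ (c * y) ^ m * y ^ j :=
        mul_le_mul (pow_le_pow_left₀ hx hxc m) (pow_le_pow_left₀ hx hxy j) (by positivity)
          (pow_nonneg (hx.trans hxc) m)
    _ = c ^ m * y ^ (m + j) := by ring

namespace ContinuousLinearMap

section NonUnital

variable {𝕜 A B : Type*} [NontriviallyNormedField 𝕜]
  [NonUnitalNormedRing A] [StarRing A] [CStarRing A] [NormedSpace 𝕜 A]
  [NonUnitalNormedRing B] [StarRing B] [CStarRing B] [NormedSpace 𝕜 B]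
  {h : A →L[𝕜] B}

theorem norm_apply_pow_two_pow_le (hmul : ∀ a, h (star a * a) = star (h a) * h a) (n : ℕ)
    (a : A) : ‖h a‖ ^ 2 ^ n ≤ ‖h‖ * ‖a‖ ^ 2 ^ n := by
  induction n generalizing a with
  | zero => simpa using h.le_opNorm a
  | succ n ih =>
    have h_sq : ‖h a‖ ^ 2 = ‖h (star a * a)‖ := by
      rw [hmul, CStarRing.norm_star_mul_self, sq]
    have a_sq : ‖a‖ ^ 2 = ‖star a * a‖ := by
      rw [CStarRing.norm_star_mul_self, sq]
    calc ‖h a‖ ^ 2 ^ (n + 1) = ‖h (star a * a)‖ ^ 2 ^ n := by rw [pow_succ', pow_mul, h_sq]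
      _ ≤ ‖h‖ * ‖star a * a‖ ^ 2 ^ n := ih _
      _ = ‖h‖ * ‖a‖ ^ 2 ^ (n + 1) := by rw [pow_succ', pow_mul, a_sq]

theorem norm_apply_le_of_map_star_mul_self (hmul : ∀ a, h (star a * a) = star (h a) * h a)
    (a : A) : ‖h a‖ ≤ ‖a‖ :=
  le_of_forall_pow_two_pow_le_mul (norm_nonneg a) fun n => h.norm_apply_pow_two_pow_le hmul n a

end NonUnital

theorem one_le_opNorm_of_map_one {𝕜 A B : Type*} [NontriviallyNormedField 𝕜]
    [NormedRing A] [StarRing A] [CStarRing A] [NormedSpace 𝕜 A]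
    [NormedRing B] [StarRing B] [CStarRing B] [NormedSpace 𝕜 B] [Nontrivial B]
    (h : A →L[𝕜] B) (h1 : h 1 = 1) : 1 ≤ ‖h‖ := by
  have : Nontrivial A :=
    nontrivial_of_ne (1 : A) 0 fun h10 => one_ne_zero (by rw [← h1, h10, map_zero])
  simpa [h1, CStarRing.norm_one] using h.le_opNorm 1

end ContinuousLinearMap

theorem stmt_14_general {A B : Type*}
    [NormedRing A] [StarRing A] [CStarRing A] [NormedAlgebra ℂ A]
    [NormedRing B] [StarRing B] [CStarRing B] [NormedAlgebra ℂ B]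
    (h : A →L[ℂ] B)
    (hmul : ∀ a : A, h (star a * a) = star (h a) * h a)
    (k : ℕ)
    (hpow : ∀ a : A, h ((star a * a) ^ k) = (h (star a * a)) ^ k) :
    ∀ a : A, ‖h a‖ ^ (4 * k + 2) ≤ ‖h‖ ^ 4 * ‖a‖ ^ (4 * k + 2) := by
  intro a
  have h_contr : ‖h a‖ ≤ ‖a‖ := h.norm_apply_le_of_map_star_mul_self hmul a
  rcases k with _ | j
  · have h1 : h 1 = 1 := by simpa using hpow 0
    rcases subsingleton_or_nontrivial B with hB | hB
    · rw [Subsingleton.elim (h a) 0, norm_zero, zero_pow (by norm_num)]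
      positivity
    · calc ‖h a‖ ^ (4 * 0 + 2) ≤ ‖a‖ ^ (4 * 0 + 2) := pow_le_pow_left₀ (norm_nonneg _) h_contr _
        _ ≤ ‖h‖ ^ 4 * ‖a‖ ^ (4 * 0 + 2) :=
          le_mul_of_one_le_left (by positivity) (one_le_pow₀ (h.one_le_opNorm_of_map_one h1))
  · rw [show 4 * (j + 1) + 2 = 4 + (4 * j + 2) by ring]
    exact pow_add_le_pow_mul_pow_add (norm_nonneg _) (h.le_opNorm a) h_contr 4 _

theorem stmt_14 {A B : Type*}
    [NormedRing A] [StarRing A] [CStarRing A] [NormedAlgebra ℂ A] [CompleteSpace A] [StarModule ℂ A]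
    [NormedRing B] [StarRing B] [CStarRing B] [NormedAlgebra ℂ B] [CompleteSpace B] [StarModule ℂ B]
    (h : A →L[ℂ] B)
    (hmul : ∀ a : A, h (star a * a) = star (h a) * h a)
    (k : ℕ)
    (hpow : ∀ a : A, h ((star a * a) ^ k) = (h (star a * a)) ^ k) :
    ∀ a : A, ‖h a‖ ^ (4 * k + 2) ≤ ‖h‖ ^ 4 * ‖a‖ ^ (4 * k + 2) :=
  stmt_14_general h hmul k hpow
end

section
/- Let A and B be commutative algebras over ℚ and h : A → B an additive map with h(a⁴) = h(a)⁴ for all a ∈ A. Then for all x, y, z ∈ A, h(xyz(x + y + z)) = h(x)h(y)h(z)(h(x) + h(y) + h(z)). -/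
/-!
Polarizing the quartic form `a ↦ a⁴` expresses `24 • abcd` as an integer combination of fourth
powers of partial sums of `a, b, c, d`. An additive map preserving fourth powers therefore
preserves `24 • abcd`, hence `abcd` once `24` can be cancelled in the target. Taking
`d = x + y + z` gives the theorem.
-/

lemma add_pow_four_polarization {R : Type*} [CommSemiring R] (a b c d : R) :
    (a + b + c + d) ^ 4
        + ((a + b) ^ 4 + (a + c) ^ 4 + (a + d) ^ 4 + (b + c) ^ 4 + (b + d) ^ 4 + (c + d) ^ 4) =
      24 • (a * b * c * d)
        + ((a + b + c) ^ 4 + (a + b + d) ^ 4 + (a + c + d) ^ 4 + (b + c + d) ^ 4)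
        + (a ^ 4 + b ^ 4 + c ^ 4 + d ^ 4) := by
  rw [nsmul_eq_mul]
  push_cast
  ring

lemma AddMonoidHom.map_mul_mul_mul_of_map_pow_four {A B : Type*} [CommSemiring A] [CommRing B]
    [IsAddTorsionFree B] (f : A →+ B) (hf : ∀ a, f (a ^ 4) = f a ^ 4) (a b c d : A) :
    f (a * b * c * d) = f a * f b * f c * f d := by
  have hpol := congrArg f (add_pow_four_polarization a b c d)
  simp only [map_add, map_nsmul, hf] at hpol
  rw [add_pow_four_polarization (f a) (f b) (f c) (f d), add_left_inj, add_left_inj] at hpol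
  exact (IsAddTorsionFree.nsmul_right_injective (by norm_num) hpol).symm

theorem stmt_17_general {A B : Type*} [CommRing A] [CommRing B] [Algebra ℚ B]
    (h : A → B)
    (hadd : ∀ x y : A, h (x + y) = h x + h y)
    (hjordan : ∀ a : A, h (a ^ 4) = (h a) ^ 4) :
    ∀ x y z : A, h (x * y * z * (x + y + z)) = h x * h y * h z * (h x + h y + h z) := by
  intro x y z
  have : IsAddTorsionFree B := .of_module_rat B
  simpa only [AddMonoidHom.mk'_apply, hadd] using
    (AddMonoidHom.mk' h hadd).map_mul_mul_mul_of_map_pow_four hjordan x y z (x + y + z)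

theorem stmt_17 {A B : Type*} [CommRing A] [Algebra ℚ A] [CommRing B] [Algebra ℚ B]
    (h : A → B)
    (hadd : ∀ x y : A, h (x + y) = h x + h y)
    (hjordan : ∀ a : A, h (a ^ 4) = (h a) ^ 4) :
    ∀ x y z : A, h (x * y * z * (x + y + z)) = h x * h y * h z * (h x + h y + h z) :=
  stmt_17_general h hadd hjordan
end

section
/- Let A be a (not necessarily commutative) ring and h : A → ℂ an additive map with h(a³) = (h(a))³ for all a ∈ A. Then h(yxz + zxy + 2xyz + 2yzx) = 6·h(x)h(y)h(z) for all x, y, z ∈ A. -/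
theorem stmt_18 {A : Type*} [Ring A] (h : A → ℂ)
    (hadd : ∀ x y : A, h (x + y) = h x + h y)
    (hjordan : ∀ a : A, h (a ^ 3) = (h a) ^ 3) :
    ∀ x y z : A, h (y * x * z + z * x * y + 2 * (x * y * z) + 2 * (y * z * x)) =
      6 * (h x * h y * h z) := by
  have h0 : h 0 = 0 := by
    have e := hadd 0 0
    rw [add_zero] at e
    exact left_eq_add.mp e
  have hneg : ∀ x : A, h (-x) = - h x := by
    intro x
    have e := hadd x (-x)
    rw [add_neg_cancel] at e
    linear_combination h0 - e
  -- general expansion of h((a+b)^3)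
  have gen : ∀ a b : A,
      h (a ^ 3) + (h (a ^ 2 * b + a * b * a + b * a ^ 2) +
        (h (a * b ^ 2 + b * a * b + b ^ 2 * a) + h (b ^ 3))) = (h a + h b) ^ 3 := by
    intro a b
    have e := hjordan (a + b)
    rw [hadd a b] at e
    rw [show (a + b) ^ 3 = a ^ 3 + ((a ^ 2 * b + a * b * a + b * a ^ 2) +
      ((a * b ^ 2 + b * a * b + b ^ 2 * a) + b ^ 3)) from by noncomm_ring] at e
    rw [hadd (a ^ 3), hadd (a ^ 2 * b + a * b * a + b * a ^ 2),
      hadd (a * b ^ 2 + b * a * b + b ^ 2 * a)] at e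
    exact e
  -- the two polarization identities
  have key1 : ∀ a b : A, h (a ^ 2 * b + a * b * a + b * a ^ 2) = 3 * h a ^ 2 * h b := by
    intro a b
    have E1 := gen a b
    have E2 := gen a (-b)
    rw [hneg b] at E2
    rw [show a ^ 2 * (-b) + a * (-b) * a + (-b) * a ^ 2
        = -(a ^ 2 * b + a * b * a + b * a ^ 2) from by noncomm_ring] at E2
    rw [show a * (-b) ^ 2 + (-b) * a * (-b) + (-b) ^ 2 * a
        = a * b ^ 2 + b * a * b + b ^ 2 * a from by noncomm_ring] at E2
    rw [show (-b) ^ 3 = -(b ^ 3) from by noncomm_ring] at E2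
    rw [hneg, hneg] at E2
    have jb := hjordan b
    linear_combination (E1 - E2) / 2 - jb
  have key2 : ∀ a b : A, h (a * b ^ 2 + b * a * b + b ^ 2 * a) = 3 * h a * h b ^ 2 := by
    intro a b
    have E1 := gen a b
    have E2 := gen a (-b)
    rw [hneg b] at E2
    rw [show a ^ 2 * (-b) + a * (-b) * a + (-b) * a ^ 2
        = -(a ^ 2 * b + a * b * a + b * a ^ 2) from by noncomm_ring] at E2
    rw [show a * (-b) ^ 2 + (-b) * a * (-b) + (-b) ^ 2 * a
        = a * b ^ 2 + b * a * b + b ^ 2 * a from by noncomm_ring] at E2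
    rw [show (-b) ^ 3 = -(b ^ 3) from by noncomm_ring] at E2
    rw [hneg, hneg] at E2
    have ja := hjordan a
    linear_combination (E1 + E2) / 2 - ja
  by_cases hc : h 1 * h 1 = 1
  · -- main case
    have hsq : ∀ a : A, h (a * a) = h 1 * (h a * h a) := by
      intro a
      have e := key1 a 1
      rw [show a ^ 2 * 1 + a * 1 * a + 1 * a ^ 2 = a * a + (a * a + a * a) from by
        noncomm_ring, hadd (a * a) (a * a + a * a), hadd (a * a) (a * a)] at e
      linear_combination e / 3
    have hsymm : ∀ a b : A, h (a * b + b * a) = 2 * h 1 * (h a * h b) := by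
      intro a b
      have e := hsq (a + b)
      rw [hadd a b] at e
      rw [show (a + b) * (a + b) = a * a + ((a * b + b * a) + b * b) from by
        noncomm_ring, hadd (a * a), hadd (a * b + b * a) (b * b), hsq a, hsq b] at e
      linear_combination e
    have haba : ∀ a b : A, h (a * b * a) = (h a * h a) * h b := by
      intro a b
      have e1 := key1 a b
      rw [show a ^ 2 * b + a * b * a + b * a ^ 2
          = a * b * a + ((a * a) * b + b * (a * a)) from by noncomm_ring,
        hadd (a * b * a)] at e1
      have e2 := hsymm (a * a) b
      have e3 := hsq a
      linear_combination e1 - e2 - 2 * h 1 * h b * e3 - 2 * (h a * h a) * h b * hc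
    have habc : ∀ a b c : A, h (a * b * c + c * b * a) = 2 * (h a * h c) * h b := by
      intro a b c
      have e := haba (a + c) b
      rw [hadd a c] at e
      rw [show (a + c) * b * (a + c)
          = a * b * a + ((a * b * c + c * b * a) + c * b * c) from by noncomm_ring,
        hadd (a * b * a), hadd (a * b * c + c * b * a) (c * b * c),
        haba a b, haba c b] at e
      linear_combination e
    have hmul : ∀ y z : A, h (y * z) = h 1 * (h y * h z) := by
      intro y z
      have s := hsymm y z
      rw [hadd] at s
      have p := hsymm (y * z) (z * y)
      rw [show y * z * (z * y) + z * y * (y * z)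
          = y * (z * z) * y + (z * (y * y) * z) from by noncomm_ring, hadd,
        haba y (z * z), haba z (y * y), hsq z, hsq y] at p
      have h1ne : (2 : ℂ) * h 1 ≠ 0 := by
        intro e
        have : h 1 = 0 := by
          rcases mul_eq_zero.mp e with e' | e'
          · norm_num at e'
          · exact e'
        rw [this] at hc
        norm_num at hc
      have hprod : h (y * z) * h (z * y) = (h y * h z) * (h y * h z) :=
        mul_left_cancel₀ h1ne (by linear_combination -p)
      have d2 : (h (y * z) - h (z * y)) ^ 2 = 0 := by
        linear_combination (h (y * z) + h (z * y) + 2 * h 1 * (h y * h z)) * s +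
          4 * ((h y * h z) * (h y * h z)) * hc - 4 * hprod
      have heq : h (y * z) = h (z * y) :=
        sub_eq_zero.mp (pow_eq_zero_iff (two_ne_zero) |>.mp d2)
      linear_combination s / 2 + heq / 2
    intro x y z
    rw [show y * x * z + z * x * y + 2 * (x * y * z) + 2 * (y * z * x)
        = (y * x * z + z * x * y) + ((x * (y * z) + (y * z) * x) +
          (x * (y * z) + (y * z) * x)) from by noncomm_ring,
      hadd (y * x * z + z * x * y), hadd (x * (y * z) + (y * z) * x),
      habc y x z, hsymm x (y * z), hmul y z]
    linear_combination (4 * (h x * (h y * h z))) * hc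
  · -- degenerate case: h ≡ 0
    have hz : ∀ a : A, h a = 0 := by
      intro a
      have e := key2 a 1
      rw [show a * 1 ^ 2 + 1 * a * 1 + 1 ^ 2 * a = a + (a + a) from by noncomm_ring,
        hadd a (a + a), hadd a a] at e
      have e2 : h a * (1 - h 1 * h 1) = 0 := by linear_combination e / 3
      rcases mul_eq_zero.mp e2 with h1 | h1
      · exact h1
      · exact absurd (by linear_combination -h1) hc
    intro x y z
    simp [hz]
end

section
/- Let A be a (not necessarily commutative) ring and h : A → ℂ an additive map with h(a³) = (h(a))³ for all a ∈ A. Then h(yx²) = h(y)·h(x)² for all x, y ∈ A. -/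
theorem stmt_19 {A : Type*} [Ring A] (h : A → ℂ)
    (hadd : ∀ x y : A, h (x + y) = h x + h y)
    (hjordan : ∀ a : A, h (a ^ 3) = (h a) ^ 3) :
    ∀ x y : A, h (y * x ^ 2) = h y * (h x) ^ 2 := by
  have h0 : h 0 = 0 := by
    have H := hadd 0 0
    rw [add_zero] at H
    linear_combination -H
  have hneg : ∀ a : A, h (-a) = - h a := by
    intro a
    have H := hadd a (-a)
    rw [add_neg_cancel] at H
    linear_combination h0 - H
  have hP1 : ∀ a b : A, h (a^2*b) + h (a*b*a) + h (b*a^2) = 3 * h a^2 * h b := by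
    intro a b
    have E1 := hjordan (a+b)
    have e1 : (a+b)^3 = a^3 + a^2*b + a*b*a + b*a^2 + a*b^2 + b*a*b + b^2*a + b^3 := by
      noncomm_ring
    rw [e1] at E1
    simp only [hadd] at E1
    rw [hjordan a, hjordan b] at E1
    have E2 := hjordan (a + -b)
    have e2 : (a + -b)^3 = a^3 + -(a^2*b) + -(a*b*a) + -(b*a^2) + a*b^2 + b*a*b + b^2*a + -(b^3) := by
      noncomm_ring
    rw [e2] at E2
    simp only [hadd, hneg] at E2
    rw [hjordan a, hjordan b] at E2
    linear_combination (E1 - E2)/2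
  have htri : ∀ a b c : A, h (a*c*b) + h (c*a*b) + h (a*b*c) + h (c*b*a) + h (b*a*c) + h (b*c*a)
      = 6 * h a * h b * h c := by
    intro a b c
    have K := hP1 (a+c) b
    have e1 : (a+c)^2*b = a^2*b + a*c*b + c*a*b + c^2*b := by noncomm_ring
    have e2 : (a+c)*b*(a+c) = a*b*a + a*b*c + c*b*a + c*b*c := by noncomm_ring
    have e3 : b*(a+c)^2 = b*a^2 + b*a*c + b*c*a + b*c^2 := by noncomm_ring
    rw [e1, e2, e3] at K
    simp only [hadd] at K
    linear_combination K - hP1 a b - hP1 c b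
  have hsq : ∀ a : A, h (a^2) = h 1 * h a^2 := by
    intro a
    have K := hP1 a 1
    have e1 : a^2*(1:A) = a^2 := by noncomm_ring
    have e2 : a*(1:A)*a = a^2 := by noncomm_ring
    have e3 : (1:A)*a^2 = a^2 := by noncomm_ring
    rw [e1, e2, e3] at K
    linear_combination K/3
  have htrace : ∀ b : A, 3 * h b = 3 * h 1^2 * h b := by
    intro b
    have K := hP1 1 b
    have e1 : (1:A)^2*b = b := by noncomm_ring
    have e2 : (1:A)*b*1 = b := by noncomm_ring
    have e3 : b*(1:A)^2 = b := by noncomm_ring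
    rw [e1, e2, e3] at K
    linear_combination K
  have hbil : ∀ a b : A, h (a*b) + h (b*a) = 2 * h 1 * h a * h b := by
    intro a b
    have K := htri a b 1
    simp only [one_mul, mul_one] at K
    linear_combination K/3
  by_cases hε : h 1 ^ 2 = 1
  · have hε0 : h 1 ≠ 0 := by
      intro e
      rw [e] at hε
      norm_num at hε
    have hxyx : ∀ a b : A, h (a*b*a) = h a^2 * h b := by
      intro a b
      have B := hbil (a^2) b
      rw [hsq a] at B
      linear_combination hP1 a b - B - 2*h a^2*h b*hε
    have hprod : ∀ a b : A, h (a*b) * h (b*a) = h a^2 * h b^2 := by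
      intro a b
      have B := hbil (a*b) (b*a)
      have e1 : (a*b)*(b*a) = a*b^2*a := by noncomm_ring
      have e2 : (b*a)*(a*b) = b*a^2*b := by noncomm_ring
      rw [e1, e2, hxyx a (b^2), hxyx b (a^2), hsq a, hsq b] at B
      have T := mul_left_cancel₀ hε0
        (show h 1 * (h (a*b) * h (b*a)) = h 1 * (h a^2 * h b^2) by
          linear_combination -B/2)
      linear_combination T
    have hsumsq : ∀ a b : A, h 1 * (h (a*b)^2 + h (b*a)^2) = h 1 * (2 * h a^2 * h b^2) := by
      intro a b
      have S := hsq (a*b + b*a)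
      have e : (a*b + b*a)^2 = (a*b)^2 + a*b^2*a + b*a^2*b + (b*a)^2 := by noncomm_ring
      rw [e] at S
      simp only [hadd] at S
      rw [hsq (a*b), hsq (b*a), hxyx a (b^2), hxyx b (a^2), hsq a, hsq b] at S
      linear_combination S + (h 1*(h (a*b)+h (b*a)) + 2*h 1^2*h a*h b)*hbil a b
        + 4*h 1*h a^2*h b^2*hε
    have hcomm : ∀ a b : A, h (a*b) = h (b*a) := by
      intro a b
      have T := mul_left_cancel₀ hε0
        (show h 1 * ((h (a*b) - h (b*a))^2) = h 1 * 0 by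
          linear_combination hsumsq a b - 2*h 1*(hprod a b))
      have T2 : (h (a*b) - h (b*a))^2 = 0 := by linear_combination T
      exact sub_eq_zero.mp ((pow_eq_zero_iff (two_ne_zero (α := ℕ))).mp T2)
    intro x y
    have B0 := hbil (x^2) y
    rw [hsq x] at B0
    have B1 := hbil (x*y) x
    have e1 : x*(x*y) = x^2*y := by noncomm_ring
    rw [e1] at B1
    have B2 := hbil (y*x) x
    have e2 : (y*x)*x = y*x^2 := by noncomm_ring
    have e3 : x*(y*x) = x*y*x := by noncomm_ring
    rw [e2, e3] at B2
    linear_combination (B0 - B1 + B2)/2 + h x^2*h y*hε - h 1*h x*(hcomm x y)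
  · have hz : ∀ b : A, h b = 0 := by
      intro b
      have H := htrace b
      have hb3 : h b * (3 - 3*h 1^2) = 0 := by linear_combination H
      rcases mul_eq_zero.mp hb3 with e | e
      · exact e
      · exact absurd (by linear_combination -e/3) hε
    intro x y
    rw [hz (y*x^2), hz y]
    ring
end
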